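/- arXiv:2107.07637 — 2 statements merged into one kernel-verified Lean document; each statement's English description precedes it below -/
import Mathlib

section
/- For every positive integer n, ∑_{k ∈ ℤ} σ_odd(n - P_m(k)) ≡ a_m(n) + b_m(n) (mod 2), where a_m(n) = #{(ℓ,k) ∈ ℤ⁺ × ℤ : ℓ² + P_m(k) = n} and b_m(n) = #{(ℓ,k) ∈ ℤ⁺ × ℤ : 2ℓ² + P_m(k) = n}, for any integer m ≥ 3. -/
/-- Sum of odd divisors: `σ_odd n = ∑_{d ∣ n, d odd} d` for `n > 0`, and `0` for `n ≤ 0`. -/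
def sigmaOdd (n : ℤ) : ℤ :=
  if 0 < n then ∑ d ∈ n.toNat.divisors.filter (fun d => Odd d), (d : ℤ) else 0

/-- The `k`-th generalized `m`-gonal number `P_m(k) = ((m-2)k² - (m-4)k)/2`. -/
def Pgon (m k : ℤ) : ℤ := ((m - 2) * k ^ 2 - (m - 4) * k) / 2

/-!
The odd divisors of `N > 0` are the divisors of its odd part `u`, and `d ↦ u / d` pairs them off
except for `√u`; so `σ_odd(N)` is odd exactly when `u` is a square, i.e. when `N` is a square or
twice a square (never both). Doubling `N` leaves `σ_odd(N)` unchanged and swaps "square" with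
"twice a square", which reduces this to odd `N`. Hence the `k`-th term of the sum is congruent to
the number of `ℓ > 0` with `ℓ² + P_m(k) = n` or `2ℓ² + P_m(k) = n`, and only `|k| ≤ n` contribute
since `2 P_m(k) ≥ k(k+1)`.
-/

open Finset

theorem Finset.card_zmod_two_eq_card_filter_fixed {α : Type*} [DecidableEq α] {s : Finset α}
    {g : α → α} (hg : ∀ a ∈ s, g a ∈ s) (hgg : ∀ a ∈ s, g (g a) = a) :
    (#s : ZMod 2) = #{a ∈ s | g a = a} := by
  have hfree : (#{a ∈ s | g a ≠ a} : ZMod 2) = 0 := by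
    rw [card_eq_sum_ones, Nat.cast_sum]
    refine sum_involution (fun a _ => g a) (fun _ _ => by decide)
      (fun _ ha _ => (mem_filter.1 ha).2) (fun a ha => ?_) (fun a ha => hgg a (mem_filter.1 ha).1)
    obtain ⟨has, hga⟩ := mem_filter.1 ha
    exact mem_filter.2 ⟨hg a has, by rwa [hgg a has, ne_comm]⟩
  rw [← card_filter_add_card_filter_not (fun a => g a = a), Nat.cast_add, hfree, add_zero]

theorem Nat.card_divisors_zmod_two {M : ℕ} (hM : M ≠ 0) :
    (#M.divisors : ZMod 2) = if IsSquare M then 1 else 0 := by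
  rw [card_zmod_two_eq_card_filter_fixed (g := (M / ·))
    (fun d hd => Nat.mem_divisors.2 ⟨Nat.div_dvd_of_dvd (Nat.dvd_of_mem_divisors hd), hM⟩)
    (fun d hd => Nat.div_div_self (Nat.dvd_of_mem_divisors hd) hM)]
  have hfixed (d : ℕ) : d ∈ M.divisors ∧ M / d = d ↔ d * d = M := by
    constructor
    · rintro ⟨hd, hfix⟩
      rw [← Nat.div_mul_cancel (Nat.dvd_of_mem_divisors hd), hfix]
    · rintro rfl
      exact ⟨Nat.mem_divisors.2 ⟨dvd_mul_right d d, hM⟩,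
        Nat.mul_div_cancel_left d (Nat.pos_of_mul_pos_left (Nat.pos_of_ne_zero hM))⟩
  split_ifs with hsq
  · obtain ⟨r, rfl⟩ := hsq
    rw [card_eq_one.2 ⟨r, ext fun d => by
      simp only [mem_filter, hfixed, mem_singleton, Nat.mul_self_inj]⟩, Nat.cast_one]
  · rw [filter_eq_empty_iff.2 fun d hd hfix => hsq ⟨d, ((hfixed d).1 ⟨hd, hfix⟩).symm⟩,
      card_empty, Nat.cast_zero]

theorem Nat.filter_odd_divisors_two_mul (M : ℕ) :
    {d ∈ (2 * M).divisors | Odd d} = {d ∈ M.divisors | Odd d} := by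
  ext d
  simp only [mem_filter, Nat.mem_divisors, mul_ne_zero_iff, ne_eq, OfNat.ofNat_ne_zero,
    not_false_eq_true, true_and, and_congr_left_iff]
  exact fun hd _ => (Nat.coprime_two_right.2 hd).dvd_mul_left

theorem sigmaOdd_natCast (M : ℕ) : sigmaOdd M = ∑ d ∈ M.divisors with Odd d, (d : ℤ) := by
  rcases M.eq_zero_or_pos with rfl | hM
  · simp [sigmaOdd]
  · simp [sigmaOdd, hM]

theorem sigmaOdd_of_nonpos {N : ℤ} (hN : N ≤ 0) : sigmaOdd N = 0 := if_neg hN.not_gt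

theorem sigmaOdd_two_mul (N : ℤ) : sigmaOdd (2 * N) = sigmaOdd N := by
  rcases le_or_gt N 0 with hN | hN
  · rw [sigmaOdd_of_nonpos hN, sigmaOdd_of_nonpos (by omega)]
  · lift N to ℕ using hN.le
    rw [← Nat.cast_ofNat, ← Nat.cast_mul, sigmaOdd_natCast, sigmaOdd_natCast,
      Nat.filter_odd_divisors_two_mul]

theorem sigmaOdd_cast_zmod_two_of_odd {u : ℕ} (hu : Odd u) :
    (sigmaOdd u : ZMod 2) = if IsSquare u then 1 else 0 := by
  have hdiv_odd : ∀ d ∈ u.divisors, Odd d := fun _ hd => hu.of_dvd_nat (Nat.dvd_of_mem_divisors hd)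
  rw [sigmaOdd_natCast, filter_true_of_mem hdiv_odd, Int.cast_sum,
    ← Nat.card_divisors_zmod_two hu.pos.ne', card_eq_sum_ones, Nat.cast_sum]
  exact sum_congr rfl fun d hd => by
    rw [Int.cast_natCast, ZMod.natCast_eq_one_iff_odd.2 (hdiv_odd d hd), Nat.cast_one]

theorem Int.isSquare_iff_exists_pos_sq {N : ℤ} (hN : N ≠ 0) :
    IsSquare N ↔ ∃ ℓ : ℤ, 0 < ℓ ∧ ℓ ^ 2 = N := by
  constructor
  · rintro ⟨r, rfl⟩
    exact ⟨|r|, abs_pos.2 (left_ne_zero_of_mul hN), by rw [sq_abs, sq]⟩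
  · rintro ⟨ℓ, -, rfl⟩
    exact ⟨ℓ, sq ℓ⟩

open Classical in
noncomputable def sqOrTwiceSqParity (N : ℤ) : ZMod 2 :=
  (if ∃ ℓ : ℤ, 0 < ℓ ∧ ℓ ^ 2 = N then 1 else 0) +
    (if ∃ ℓ : ℤ, 0 < ℓ ∧ 2 * ℓ ^ 2 = N then 1 else 0)

theorem sqOrTwiceSqParity_of_nonpos {N : ℤ} (hN : N ≤ 0) : sqOrTwiceSqParity N = 0 := by
  have hsq (c ℓ : ℤ) (hc : 0 < c) (hℓ : 0 < ℓ) : c * ℓ ^ 2 ≠ N := by nlinarith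
  rw [sqOrTwiceSqParity, if_neg, if_neg, add_zero]
  · exact fun ⟨ℓ, hℓ, h⟩ => hsq 2 ℓ two_pos hℓ h
  · exact fun ⟨ℓ, hℓ, h⟩ => hsq 1 ℓ one_pos hℓ (by rw [one_mul, h])

open Classical in
theorem sqOrTwiceSqParity_of_odd {N : ℤ} (hN : Odd N) :
    sqOrTwiceSqParity N = if ∃ ℓ : ℤ, 0 < ℓ ∧ ℓ ^ 2 = N then 1 else 0 := by
  have htwice : ¬∃ ℓ : ℤ, 0 < ℓ ∧ 2 * ℓ ^ 2 = N := by
    rintro ⟨ℓ, -, rfl⟩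
    exact Int.not_odd_iff_even.2 (even_two_mul _) hN
  rw [sqOrTwiceSqParity, if_neg htwice, add_zero]

theorem sqOrTwiceSqParity_two_mul (N : ℤ) : sqOrTwiceSqParity (2 * N) = sqOrTwiceSqParity N := by
  have hsq : (∃ ℓ : ℤ, 0 < ℓ ∧ ℓ ^ 2 = 2 * N) ↔ ∃ ℓ : ℤ, 0 < ℓ ∧ 2 * ℓ ^ 2 = N := by
    constructor
    · rintro ⟨ℓ, hℓ, h⟩
      obtain ⟨s, rfl⟩ : Even ℓ := by
        rw [← Int.even_pow' two_ne_zero, h]; exact even_two_mul N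
      exact ⟨s, by omega, by linarith⟩
    · rintro ⟨ℓ, hℓ, rfl⟩
      exact ⟨2 * ℓ, by omega, by ring⟩
  have htwice : (∃ ℓ : ℤ, 0 < ℓ ∧ 2 * ℓ ^ 2 = 2 * N) ↔ ∃ ℓ : ℤ, 0 < ℓ ∧ ℓ ^ 2 = N := by
    simp only [mul_right_inj' (two_ne_zero : (2 : ℤ) ≠ 0)]
  classical
  simp only [sqOrTwiceSqParity, hsq, htwice]
  exact add_comm _ _

theorem sigmaOdd_cast_zmod_two (N : ℤ) : (sigmaOdd N : ZMod 2) = sqOrTwiceSqParity N := by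
  rcases le_or_gt N 0 with hN | hN
  · rw [sigmaOdd_of_nonpos hN, sqOrTwiceSqParity_of_nonpos hN, Int.cast_zero]
  lift N to ℕ using hN.le
  obtain ⟨a, u, hu, rfl⟩ := Nat.exists_eq_two_pow_mul_odd (Nat.cast_pos.1 hN).ne'
  push_cast
  clear hN
  induction a with
  | zero =>
    rw [pow_zero, one_mul, sigmaOdd_cast_zmod_two_of_odd hu,
      sqOrTwiceSqParity_of_odd (by exact_mod_cast hu),
      ← Int.isSquare_iff_exists_pos_sq (Nat.cast_ne_zero.2 hu.pos.ne'), Int.isSquare_natCast_iff]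
    -- the two sides differ only in their `Decidable` instances
    congr 1
  | succ a ih =>
    rw [pow_succ', mul_assoc, sigmaOdd_two_mul, sqOrTwiceSqParity_two_mul, ih]

theorem two_mul_Pgon (m k : ℤ) : 2 * Pgon m k = (m - 2) * (k * (k - 1)) + 2 * k := by
  have hnum : (m - 2) * k ^ 2 - (m - 4) * k = (m - 2) * (k * (k - 1)) + 2 * k := by ring
  rw [Pgon, hnum, Int.mul_ediv_cancel']
  exact (Int.even_mul_pred_self k).mul_left _ |>.add (even_two_mul k) |>.two_dvd

theorem abs_le_of_Pgon_lt {m k n : ℤ} (hm : 3 ≤ m) (h : Pgon m k < n) : |k| ≤ n := by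
  have hP := two_mul_Pgon m k
  have hkk : 0 ≤ k * (k - 1) := by nlinarith [sq_nonneg (2 * k - 1)]
  have hlb : k * (k + 1) < 2 * n := by nlinarith
  rw [abs_le]; constructor <;> nlinarith [Int.le_self_sq n]

theorem Set.ncard_eq_card_filter_of_injOn_snd {α β : Type*} {S : Set (α × β)} {I : Finset β}
    [DecidablePred fun b => ∃ a, (a, b) ∈ S] (hinj : S.InjOn Prod.snd) (hI : ∀ p ∈ S, p.2 ∈ I) :
    S.ncard = #{b ∈ I | ∃ a, (a, b) ∈ S} := by
  have himage : Prod.snd '' S = ↑({b ∈ I | ∃ a, (a, b) ∈ S}) := by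
    ext b
    simp only [Set.mem_image, coe_filter, Set.mem_ofPred_eq, Prod.exists, exists_eq_right]
    exact ⟨fun ⟨a, h⟩ => ⟨hI _ h, a, h⟩, fun ⟨_, h⟩ => h⟩
  rw [← hinj.ncard_image, himage, Set.ncard_coe_finset]

theorem injOn_snd_of_mul_sq_add_eq {c : ℤ} (hc : 0 < c) (g : ℤ → ℤ) (n : ℤ) :
    {p : ℤ × ℤ | 0 < p.1 ∧ c * p.1 ^ 2 + g p.2 = n}.InjOn Prod.snd := by
  rintro ⟨a, k⟩ ⟨ha, hak⟩ ⟨b, k'⟩ ⟨hb, hbk⟩ (rfl : k = k')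
  have : a ^ 2 = b ^ 2 := mul_left_cancel₀ hc.ne' (by linarith)
  exact Prod.ext ((pow_left_inj₀ ha.le hb.le two_ne_zero).1 this) rfl

theorem sum_sigmaOdd_congr_counts_general (m : ℤ) (hm : 3 ≤ m) (n : ℤ) :
    (∑ᶠ k : ℤ, sigmaOdd (n - Pgon m k)) ≡
      ((Set.ncard {p : ℤ × ℤ | 0 < p.1 ∧ p.1 ^ 2 + Pgon m p.2 = n} : ℤ) +
       (Set.ncard {p : ℤ × ℤ | 0 < p.1 ∧ 2 * p.1 ^ 2 + Pgon m p.2 = n} : ℤ)) [ZMOD 2] := by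
  classical
  have hI (k : ℤ) (hk : Pgon m k < n) : k ∈ Icc (-n) n :=
    mem_Icc.2 (abs_le.1 (abs_le_of_Pgon_lt hm hk))
  have hsupp : Function.support (fun k => sigmaOdd (n - Pgon m k)) ⊆ Icc (-n) n :=
    fun k hk => hI k (lt_of_not_ge fun hle => hk (sigmaOdd_of_nonpos (sub_nonpos.2 hle)))
  have hinj := injOn_snd_of_mul_sq_add_eq one_pos (Pgon m) n
  simp only [one_mul] at hinj
  refine (ZMod.intCast_eq_intCast_iff _ _ 2).1 ?_
  rw [finsum_eq_sum_of_support_subset _ hsupp,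
    Set.ncard_eq_card_filter_of_injOn_snd hinj fun p ⟨hp, h⟩ => hI p.2 (by nlinarith),
    Set.ncard_eq_card_filter_of_injOn_snd (injOn_snd_of_mul_sq_add_eq two_pos (Pgon m) n)
      fun p ⟨hp, h⟩ => hI p.2 (by nlinarith)]
  push_cast
  simp only [natCast_card_filter, sigmaOdd_cast_zmod_two, sqOrTwiceSqParity, Set.mem_ofPred_eq,
    eq_sub_iff_add_eq, sum_add_distrib]

theorem sum_sigmaOdd_congr_counts (m : ℤ) (hm : 3 ≤ m) (n : ℤ) (hn : 0 < n) :
    (∑ᶠ k : ℤ, sigmaOdd (n - Pgon m k)) ≡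
      ((Set.ncard {p : ℤ × ℤ | 0 < p.1 ∧ p.1 ^ 2 + Pgon m p.2 = n} : ℤ) +
       (Set.ncard {p : ℤ × ℤ | 0 < p.1 ∧ 2 * p.1 ^ 2 + Pgon m p.2 = n} : ℤ)) [ZMOD 2] :=
  sum_sigmaOdd_congr_counts_general m hm n
end

section
/- If m is a positive integer such that for all positive integers n not of the form P_5(j), the alternating sum ∑_{k ∈ ℤ} (-1)^{P_3(-k)} σ_odd(n - P_5(k)) ≡ 0 (mod m), then m ∈ {1, 2, 4}. -/
/-!
Apply the hypothesis at `n = 3`, which is not pentagonal. Since `P_5(k) ≥ 4` once `|k| ≥ 2`, only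
`k ∈ {-1, 0, 1}` contribute to the sum, which evaluates to `4`; hence `m ∣ 4`.
-/

lemma four_le_pgon_five {k : ℤ} (hk : 2 ≤ |k|) : 4 ≤ Pgon 5 k := by
  have hnum : 4 * 2 ≤ (5 - 2) * k ^ 2 - (5 - 4) * k := by
    rcases le_abs'.mp hk with hk | hk <;> nlinarith
  unfold Pgon
  omega

lemma pgon_five_ne_three (j : ℤ) : Pgon 5 j ≠ 3 := by
  rcases lt_or_ge |j| 2 with hj | hj
  · obtain rfl | rfl | rfl : j = -1 ∨ j = 0 ∨ j = 1 := by rw [abs_lt] at hj; omega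
    all_goals decide
  · have := four_le_pgon_five hj
    omega

lemma sigmaOdd_of_nonpos_s11 {n : ℤ} (hn : n ≤ 0) : sigmaOdd n = 0 :=
  if_neg hn.not_gt

lemma support_sigmaOdd_sub_pgon_five_subset {n : ℤ} (hn : n ≤ 4) (c : ℤ → ℤ) :
    Function.support (fun k => c k * sigmaOdd (n - Pgon 5 k)) ⊆ ({-1, 0, 1} : Finset ℤ) := by
  intro k hk
  contrapose! hk
  have hk' : 2 ≤ |k| := by
    simp only [Finset.coe_insert, Finset.coe_singleton, Set.mem_insert_iff,
      Set.mem_singleton_iff, not_or] at hk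
    rw [le_abs']
    omega
  have := four_le_pgon_five hk'
  simp [sigmaOdd_of_nonpos_s11 (show n - Pgon 5 k ≤ 0 by omega)]

lemma finsum_pentagonal_sigmaOdd_three :
    ∑ᶠ k : ℤ, (-1 : ℤ) ^ (Pgon 3 (-k)).toNat * sigmaOdd (3 - Pgon 5 k) = 4 := by
  rw [finsum_eq_finsetSum_of_support_subset _
    (support_sigmaOdd_sub_pgon_five_subset (by norm_num) _)]
  decide +kernel

theorem conj_three_only_if_general (m : ℕ)
    (h : ∀ n : ℤ, 0 < n → (¬ ∃ j : ℤ, Pgon 5 j = n) →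
      (m : ℤ) ∣ ∑ᶠ k : ℤ, (-1 : ℤ) ^ (Pgon 3 (-k)).toNat * sigmaOdd (n - Pgon 5 k)) :
    m ∈ ({1, 2, 4} : Set ℕ) := by
  have hdvd : (m : ℤ) ∣ 4 := by
    rw [← finsum_pentagonal_sigmaOdd_three]
    exact h 3 (by norm_num) fun ⟨j, hj⟩ => pgon_five_ne_three j hj
  have hm : m ∈ Nat.divisors 4 := Nat.mem_divisors.mpr ⟨by exact_mod_cast hdvd, by norm_num⟩
  rw [show Nat.divisors 4 = {1, 2, 4} by decide] at hm
  simpa using hm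

theorem conj_three_only_if (m : ℕ) (hm : 0 < m)
    (h : ∀ n : ℤ, 0 < n → (¬ ∃ j : ℤ, Pgon 5 j = n) →
      (m : ℤ) ∣ ∑ᶠ k : ℤ, (-1 : ℤ) ^ (Pgon 3 (-k)).toNat * sigmaOdd (n - Pgon 5 k)) :
    m ∈ ({1, 2, 4} : Set ℕ) :=
  conj_three_only_if_general m h
end
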